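/- arXiv:2209.12000 — 2 statements merged into one kernel-verified Lean document; each statement's English description precedes it below -/
import Mathlib

section
/- Consider a COP with variables x₁,…,x_N having finite nonempty domains D₁,…,D_N, and constraint functions {f_ℓ}_{ℓ∈F}, where each f_ℓ depends on a subset scp(f_ℓ) of the variables. For each i let pᵢ be a probability distribution on Dᵢ and let τᵢ* maximize pᵢ (so pᵢ(τᵢ*) ≥ 1/|Dᵢ|). Define the smoothed loss L = ∑_{ℓ∈F} ∑_{τ∈∏_{i∈scp(f_ℓ)} Dᵢ} f_ℓ(τ) ∏_{i∈scp(f_ℓ)} pᵢ(τᵢ), and Δ_ℓ = max f_ℓ − min f_ℓ. Then |L − ∑_{ℓ∈F} f_ℓ(τ*|_{scp(f_ℓ)})| ≤ ∑_{ℓ∈F} Δ_ℓ (1 − ∏_{i∈scp(f_ℓ)} 1/|Dᵢ|). -/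
theorem smoothed_loss_error_bound (N : ℕ) (D : Fin N → Type*)
    [∀ i, Fintype (D i)] [∀ i, Nonempty (D i)]
    {F : Type*} [Fintype F] (scp : F → Finset (Fin N))
    (f : F → (∀ i, D i) → ℝ)
    (hdep : ∀ ℓ σ σ', (∀ i ∈ scp ℓ, σ i = σ' i) → f ℓ σ = f ℓ σ')
    (p : ∀ i, D i → ℝ) (hp : ∀ i τ, 0 ≤ p i τ) (hsum : ∀ i, ∑ τ, p i τ = 1)
    (τs : ∀ i, D i) (hmax : ∀ i τ, p i τ ≤ p i (τs i)) :
    |(∑ ℓ, ∑ τ : ∀ i, D i, f ℓ τ * ∏ i, p i (τ i)) - ∑ ℓ, f ℓ τs| ≤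
      ∑ ℓ, (Finset.univ.sup' Finset.univ_nonempty (f ℓ) -
          Finset.univ.inf' Finset.univ_nonempty (f ℓ)) *
        (1 - ∏ i ∈ scp ℓ, (1 : ℝ) / Fintype.card (D i)) := by
  classical
  have hW : ∀ τ : ∀ i, D i, 0 ≤ ∏ i, p i (τ i) :=
    fun τ => Finset.prod_nonneg fun i _ => hp i (τ i)
  have hWsum : ∑ τ : ∀ i, D i, ∏ i, p i (τ i) = 1 := by
    have h := Finset.prod_univ_sum (fun i => (Finset.univ : Finset (D i)))
      (fun i t => p i t)
    simp only [hsum, Finset.prod_const_one] at h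
    simpa [Fintype.piFinset_univ] using h.symm
  -- p i (τs i) ≥ 1 / card
  have hpmax : ∀ i, (1 : ℝ) / Fintype.card (D i) ≤ p i (τs i) := by
    intro i
    have hcard : (0 : ℝ) < Fintype.card (D i) := by
      exact_mod_cast Fintype.card_pos
    rw [div_le_iff₀ hcard]
    calc (1 : ℝ) = ∑ τ, p i τ := (hsum i).symm
      _ ≤ ∑ _τ : D i, p i (τs i) := Finset.sum_le_sum fun τ _ => hmax i τ
      _ = p i (τs i) * Fintype.card (D i) := by
          rw [Finset.sum_const, Finset.card_univ, nsmul_eq_mul, mul_comm]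
  have key : ∀ ℓ, |(∑ τ : ∀ i, D i, f ℓ τ * ∏ i, p i (τ i)) - f ℓ τs| ≤
      (Finset.univ.sup' Finset.univ_nonempty (f ℓ) -
          Finset.univ.inf' Finset.univ_nonempty (f ℓ)) *
        (1 - ∏ i ∈ scp ℓ, (1 : ℝ) / Fintype.card (D i)) := by
    intro ℓ
    set Δ := Finset.univ.sup' Finset.univ_nonempty (f ℓ) -
        Finset.univ.inf' Finset.univ_nonempty (f ℓ) with hΔ
    have habs : ∀ τ : ∀ i, D i, |f ℓ τ - f ℓ τs| ≤ Δ := by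
      intro τ
      have h1 : ∀ σ : ∀ i, D i, f ℓ σ ≤ Finset.univ.sup' Finset.univ_nonempty (f ℓ) :=
        fun σ => Finset.le_sup' _ (Finset.mem_univ σ)
      have h2 : ∀ σ : ∀ i, D i, Finset.univ.inf' Finset.univ_nonempty (f ℓ) ≤ f ℓ σ :=
        fun σ => Finset.inf'_le _ (Finset.mem_univ σ)
      rw [abs_le]
      constructor <;> [skip; skip] <;>
        · have := h1 τ; have := h2 τ; have := h1 τs; have := h2 τs; linarith
    have hΔ0 : 0 ≤ Δ := le_trans (abs_nonneg _) (habs τs)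
    -- the set of assignments agreeing with τs on the scope
    set t : ∀ i, Finset (D i) := fun i => if i ∈ scp ℓ then {τs i} else Finset.univ with ht
    set S : Finset (∀ i, D i) := Fintype.piFinset t with hS
    have hSsum : ∑ τ ∈ S, ∏ i, p i (τ i) = ∏ i ∈ scp ℓ, p i (τs i) := by
      rw [hS, ← Finset.prod_univ_sum]
      have : ∀ i, ∑ j ∈ t i, p i j = if i ∈ scp ℓ then p i (τs i) else 1 := by
        intro i
        by_cases h : i ∈ scp ℓ <;> simp [ht, h, hsum i]
      rw [Finset.prod_congr rfl fun i _ => this i, Finset.prod_ite_mem,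
        Finset.univ_inter]
    have hmemS : ∀ τ ∈ S, ∀ i ∈ scp ℓ, τ i = τs i := by
      intro τ hτ i hi
      rw [hS, Fintype.mem_piFinset] at hτ
      have := hτ i
      simpa [ht, hi] using this
    have hrw : (∑ τ : ∀ i, D i, f ℓ τ * ∏ i, p i (τ i)) - f ℓ τs =
        ∑ τ : ∀ i, D i, (f ℓ τ - f ℓ τs) * ∏ i, p i (τ i) := by
      simp only [sub_mul, Finset.sum_sub_distrib, ← Finset.mul_sum, hWsum, mul_one]
    rw [hrw]
    have hScompl : ∑ τ ∈ Sᶜ, ∏ i, p i (τ i) = 1 - ∑ τ ∈ S, ∏ i, p i (τ i) := by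
      have := Finset.sum_add_sum_compl S (fun τ : ∀ i, D i => ∏ i, p i (τ i))
      rw [hWsum] at this
      linarith
    calc |∑ τ : ∀ i, D i, (f ℓ τ - f ℓ τs) * ∏ i, p i (τ i)|
        ≤ ∑ τ : ∀ i, D i, |(f ℓ τ - f ℓ τs) * ∏ i, p i (τ i)| :=
          Finset.abs_sum_le_sum_abs _ _
      _ = ∑ τ : ∀ i, D i, |f ℓ τ - f ℓ τs| * ∏ i, p i (τ i) := by
          refine Finset.sum_congr rfl fun τ _ => ?_
          rw [abs_mul, abs_of_nonneg (hW τ)]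
      _ = (∑ τ ∈ S, |f ℓ τ - f ℓ τs| * ∏ i, p i (τ i)) +
          ∑ τ ∈ Sᶜ, |f ℓ τ - f ℓ τs| * ∏ i, p i (τ i) :=
          (Finset.sum_add_sum_compl S _).symm
      _ ≤ 0 + ∑ τ ∈ Sᶜ, Δ * ∏ i, p i (τ i) := by
          apply add_le_add
          · apply le_of_eq
            apply Finset.sum_eq_zero
            intro τ hτ
            rw [hdep ℓ τ τs (hmemS τ hτ)]
            simp
          · exact Finset.sum_le_sum fun τ _ =>
              mul_le_mul_of_nonneg_right (habs τ) (hW τ)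
      _ = Δ * (1 - ∑ τ ∈ S, ∏ i, p i (τ i)) := by
          rw [← Finset.mul_sum, hScompl, zero_add]
      _ ≤ Δ * (1 - ∏ i ∈ scp ℓ, (1 : ℝ) / Fintype.card (D i)) := by
          apply mul_le_mul_of_nonneg_left _ hΔ0
          apply sub_le_sub_left
          rw [hSsum]
          exact Finset.prod_le_prod (fun i _ => by positivity) fun i _ => hpmax i
  calc |(∑ ℓ, ∑ τ : ∀ i, D i, f ℓ τ * ∏ i, p i (τ i)) - ∑ ℓ, f ℓ τs|
      = |∑ ℓ, ((∑ τ : ∀ i, D i, f ℓ τ * ∏ i, p i (τ i)) - f ℓ τs)| := by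
        rw [Finset.sum_sub_distrib]
    _ ≤ ∑ ℓ, |(∑ τ : ∀ i, D i, f ℓ τ * ∏ i, p i (τ i)) - f ℓ τs| :=
        Finset.abs_sum_le_sum_abs _ _
    _ ≤ _ := Finset.sum_le_sum fun ℓ _ => key ℓ
end

section
/- Let D be a finite nonempty set, b : D → ℝ, and p(τ) = exp(−b(τ))/∑_{τ'} exp(−b(τ')). If τ_min minimizes b, then for any f : D → ℝ with Δ = max f − min f, |∑_τ f(τ)p(τ) − f(τ_min)| ≤ Δ(1 − 1/|D|). -/
theorem softmax_expectation_error_bound {D : Type*} [Fintype D] [Nonempty D]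
    (b f : D → ℝ) (τmin : D) (hmin : ∀ τ, b τmin ≤ b τ) :
    |(∑ τ, f τ * (Real.exp (-(b τ)) / ∑ τ', Real.exp (-(b τ')))) - f τmin| ≤
      (Finset.univ.sup' Finset.univ_nonempty f -
        Finset.univ.inf' Finset.univ_nonempty f) *
        (1 - 1 / Fintype.card D) := by
  classical
  set S := ∑ τ' : D, Real.exp (-(b τ')) with hS
  have hSpos : 0 < S := Finset.sum_pos (fun i _ => Real.exp_pos _) Finset.univ_nonempty
  set p : D → ℝ := fun τ => Real.exp (-(b τ)) / S with hp
  have hppos : ∀ τ, 0 < p τ := fun τ => div_pos (Real.exp_pos _) hSpos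
  have hpsum : ∑ τ, p τ = 1 := by
    rw [hp, ← Finset.sum_div, ← hS, div_self hSpos.ne']
  set Δ := (Finset.univ.sup' Finset.univ_nonempty f -
      Finset.univ.inf' Finset.univ_nonempty f) with hΔ
  have hΔτ : ∀ τ, |f τ - f τmin| ≤ Δ := by
    intro τ
    have h1 : f τ ≤ Finset.univ.sup' Finset.univ_nonempty f :=
      Finset.le_sup' f (Finset.mem_univ τ)
    have h2 : Finset.univ.inf' Finset.univ_nonempty f ≤ f τ :=
      Finset.inf'_le f (Finset.mem_univ τ)
    have h3 : f τmin ≤ Finset.univ.sup' Finset.univ_nonempty f :=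
      Finset.le_sup' f (Finset.mem_univ τmin)
    have h4 : Finset.univ.inf' Finset.univ_nonempty f ≤ f τmin :=
      Finset.inf'_le f (Finset.mem_univ τmin)
    rw [abs_le]
    constructor <;> simp only [hΔ] <;> linarith
  have hΔ0 : 0 ≤ Δ := le_trans (abs_nonneg _) (hΔτ τmin)
  have hcard : (0:ℝ) < Fintype.card D := by
    exact_mod_cast Fintype.card_pos
  have hSle : S ≤ Fintype.card D * Real.exp (-(b τmin)) := by
    rw [hS]
    calc ∑ τ' : D, Real.exp (-(b τ')) ≤ ∑ _τ' : D, Real.exp (-(b τmin)) :=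
          Finset.sum_le_sum (fun i _ => Real.exp_le_exp.mpr (by linarith [hmin i]))
      _ = Fintype.card D * Real.exp (-(b τmin)) := by
          simp [Finset.sum_const, nsmul_eq_mul]
  have hpmin : 1 / (Fintype.card D : ℝ) ≤ p τmin := by
    rw [hp]
    rw [div_le_div_iff₀ hcard hSpos]
    nlinarith
  have key : (∑ τ, f τ * p τ) - f τmin = ∑ τ, (f τ - f τmin) * p τ := by
    have : ∑ τ, (f τ - f τmin) * p τ
        = (∑ τ, f τ * p τ) - f τmin * ∑ τ, p τ := by
      rw [Finset.mul_sum, ← Finset.sum_sub_distrib]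
      congr 1; ext τ; ring
    rw [this, hpsum, mul_one]
  rw [key]
  calc |∑ τ, (f τ - f τmin) * p τ| ≤ ∑ τ, |(f τ - f τmin) * p τ| :=
        Finset.abs_sum_le_sum_abs _ _
    _ = ∑ τ, |f τ - f τmin| * p τ := by
        congr 1; ext τ; rw [abs_mul, abs_of_pos (hppos τ)]
    _ ≤ ∑ τ ∈ Finset.univ.erase τmin, Δ * p τ := by
        rw [← Finset.add_sum_erase _ _ (Finset.mem_univ τmin)]
        simp only [sub_self, abs_zero, zero_mul, zero_add]
        exact Finset.sum_le_sum (fun i _ => mul_le_mul_of_nonneg_right (hΔτ i) (hppos i).le)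
    _ = Δ * (1 - p τmin) := by
        rw [← Finset.mul_sum]
        congr 1
        have := Finset.add_sum_erase _ p (Finset.mem_univ τmin)
        rw [hpsum] at this
        linarith
    _ ≤ Δ * (1 - 1 / Fintype.card D) := by
        apply mul_le_mul_of_nonneg_left _ hΔ0
        linarith
end
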